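/- arXiv:2106.10033 — 3 statements merged into one kernel-verified Lean document; each statement's English description precedes it below -/
import Mathlib

section
/- Let W, Z be independent random variables with W ~ N(0, t) and Z ~ N(0, T−t), where 0 < t < T. Let H := (1/2)[(W+Z)^2/T + log(T/(T−t)) − Z^2/(T−t)]. Then P(H < 0) > 0. -/
open MeasureTheory ProbabilityTheory

lemma gauss_pos_of_Ioo {v : NNReal} (hv : v ≠ 0) (a b : ℝ) (hab : a < b) :
    0 < gaussianReal 0 v (Set.Ioo a b) := by
  by_contra h
  push_neg at h
  have h0 : gaussianReal 0 v (Set.Ioo a b) = 0 := le_antisymm h zero_le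
  have := (gaussianReal_absolutelyContinuous' 0 hv) h0
  rw [Real.volume_Ioo] at this
  simp only [ENNReal.ofReal_eq_zero, sub_nonpos] at this
  linarith

theorem stmt_2 {Ω : Type*} [MeasureSpace Ω] [IsProbabilityMeasure (ℙ : Measure Ω)]
    (T t : ℝ) (h0 : 0 < t) (h1 : t < T) (W Z : Ω → ℝ)
    (hWm : Measurable W) (hZm : Measurable Z)
    (hW : Measure.map W ℙ = gaussianReal 0 t.toNNReal)
    (hZ : Measure.map Z ℙ = gaussianReal 0 (T - t).toNNReal)
    (hind : IndepFun W Z ℙ) :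
    0 < ℙ {ω | (1 / 2) * ((W ω + Z ω) ^ 2 / T + Real.log (T / (T - t))
        - (Z ω) ^ 2 / (T - t)) < 0} := by
  have hT : 0 < T := h0.trans h1
  have hs : 0 < T - t := sub_pos.mpr h1
  set c := Real.log (T / (T - t)) with hc
  have hc0 : 0 ≤ c := Real.log_nonneg (by rw [le_div_iff₀ hs]; linarith)
  set M : ℝ := max 1 ((8 * (T - t) + c * T * (T - t)) / t) with hM
  have hM1 : (1 : ℝ) ≤ M := le_max_left _ _
  have hMt : 8 * (T - t) + c * T * (T - t) ≤ M * t := by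
    rw [← div_le_iff₀ h0]
    exact le_max_right _ _
  -- key pointwise inequality
  have key : ∀ w z : ℝ, w ∈ Set.Ioo (-1 : ℝ) 1 → z ∈ Set.Ioo M (M + 1) →
      (1 / 2) * ((w + z) ^ 2 / T + c - z ^ 2 / (T - t)) < 0 := by
    intro w z hw hz
    obtain ⟨hw1, hw2⟩ := hw
    obtain ⟨hz1, hz2⟩ := hz
    have h1' : (w + z) ^ 2 < (M + 2) ^ 2 := by nlinarith
    have h2' : M ^ 2 < z ^ 2 := by nlinarith
    have hmid : (M + 2) ^ 2 / T + c ≤ M ^ 2 / (T - t) := by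
      rw [div_add' _ _ _ (ne_of_gt hT), div_le_div_iff₀ hT hs]
      have hM0 : (0:ℝ) ≤ M := le_trans zero_le_one hM1
      nlinarith [mul_le_mul_of_nonneg_left hMt hM0, mul_nonneg (mul_nonneg (mul_nonneg hc0 hT.le) hs.le) (sub_nonneg.mpr hM1), mul_nonneg hs.le (sub_nonneg.mpr hM1)]
    have l1 : (w + z) ^ 2 / T < (M + 2) ^ 2 / T := (div_lt_div_iff_of_pos_right hT).mpr h1'
    have l2 : M ^ 2 / (T - t) < z ^ 2 / (T - t) := (div_lt_div_iff_of_pos_right hs).mpr h2'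
    linarith
  -- the event contains the product event
  have hsub : (W ⁻¹' Set.Ioo (-1 : ℝ) 1) ∩ (Z ⁻¹' Set.Ioo M (M + 1)) ⊆
      {ω | (1 / 2) * ((W ω + Z ω) ^ 2 / T + Real.log (T / (T - t))
        - (Z ω) ^ 2 / (T - t)) < 0} := by
    rintro ω ⟨hω1, hω2⟩
    exact key (W ω) (Z ω) hω1 hω2
  have hmul := hind.measure_inter_preimage_eq_mul (Set.Ioo (-1 : ℝ) 1) (Set.Ioo M (M + 1))
    measurableSet_Ioo measurableSet_Ioo
  have hW' : ℙ (W ⁻¹' Set.Ioo (-1 : ℝ) 1) = gaussianReal 0 t.toNNReal (Set.Ioo (-1) 1) := by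
    rw [← hW, Measure.map_apply hWm measurableSet_Ioo]
  have hZ' : ℙ (Z ⁻¹' Set.Ioo M (M + 1)) =
      gaussianReal 0 (T - t).toNNReal (Set.Ioo M (M + 1)) := by
    rw [← hZ, Measure.map_apply hZm measurableSet_Ioo]
  have hpos1 : 0 < ℙ (W ⁻¹' Set.Ioo (-1 : ℝ) 1) := by
    rw [hW']
    exact gauss_pos_of_Ioo (by simp [Real.toNNReal_pos.mpr h0, (Real.toNNReal_pos.mpr h0).ne']) _ _ (by norm_num)
  have hpos2 : 0 < ℙ (Z ⁻¹' Set.Ioo M (M + 1)) := by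
    rw [hZ']
    exact gauss_pos_of_Ioo (by simp [(Real.toNNReal_pos.mpr hs).ne']) _ _ (by linarith)
  calc 0 < ℙ (W ⁻¹' Set.Ioo (-1 : ℝ) 1) * ℙ (Z ⁻¹' Set.Ioo M (M + 1)) :=
        ENNReal.mul_pos hpos1.ne' hpos2.ne'
    _ = ℙ ((W ⁻¹' Set.Ioo (-1 : ℝ) 1) ∩ (Z ⁻¹' Set.Ioo M (M + 1))) := hmul.symm
    _ ≤ _ := measure_mono hsub
end

section
/- Let W ~ N(0, t) and Z ~ N(0, T−t) be independent, with 0 < t < T and α > 0 satisfying α² t < T. Then E[exp((α/2)·((W+Z)²/T + log(T/(T−t)) − Z²/(T−t)))] = (T/(T+αt))^{1/2} · (T/(T−t))^{α/2} · ((T+αt)/(T−α²t))^{1/2}. -/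
open MeasureTheory ProbabilityTheory


open MeasureTheory ProbabilityTheory Real

lemma aux_key {b c : ℝ} (x : ℝ) : Complex.exp ((b:ℂ) * x ^ 2 + c * x + 0)
    = ((Real.exp (b * x ^ 2 + c * x) : ℝ) : ℂ) := by
  rw [show ((b:ℂ) * x ^ 2 + c * x + 0) = ((b * x ^ 2 + c * x : ℝ) : ℂ) by push_cast; ring]
  exact (Complex.ofReal_exp _).symm

lemma aux_int_rexp_quad {b : ℝ} (hb : b < 0) (c : ℝ) :
    Integrable (fun x : ℝ => Real.exp (b * x ^ 2 + c * x)) := by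
  have h := (integrable_cexp_quadratic' (b := (b:ℂ)) (by simpa using hb) (c:ℂ) 0).norm
  refine h.congr (Filter.Eventually.of_forall fun x => ?_)
  simp only [aux_key, Complex.norm_real, Real.norm_eq_abs]
  exact abs_of_pos (Real.exp_pos _)

lemma aux_rexp_quad {b : ℝ} (hb : b < 0) (c : ℝ) :
    ∫ x : ℝ, Real.exp (b * x ^ 2 + c * x)
      = Real.sqrt (π / (-b)) * Real.exp (- c ^ 2 / (4 * b)) := by
  have h := integral_cexp_quadratic (b := (b:ℂ)) (by simpa using hb) (c:ℂ) 0
  simp only [aux_key] at h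
  have h1 : ∫ x : ℝ, ((Real.exp (b * x ^ 2 + c * x) : ℝ) : ℂ)
      = ((∫ x : ℝ, Real.exp (b * x ^ 2 + c * x) : ℝ) : ℂ) := integral_ofReal
  rw [h1] at h
  have h2 : ((π:ℂ) / -(b:ℂ)) ^ (1 / 2 : ℂ) * Complex.exp (0 - (c:ℂ)^2 / (4 * b))
      = ((Real.sqrt (π / (-b)) * Real.exp (- c ^ 2 / (4 * b)) : ℝ) : ℂ) := by
    have hπb : (0:ℝ) ≤ π / (-b) := div_nonneg pi_pos.le (by linarith)
    rw [show (0 - (c:ℂ)^2 / (4 * (b:ℂ))) = ((- c ^ 2 / (4 * b) : ℝ) : ℂ) by push_cast; ring,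
      ← Complex.ofReal_exp, Complex.ofReal_mul]
    congr 1
    rw [Real.sqrt_eq_rpow, show ((π:ℂ) / -(b:ℂ)) = ((π / -b : ℝ) : ℂ) by push_cast; ring,
      show ((1:ℂ)/2) = ((1/2 : ℝ) : ℂ) by norm_num, ← Complex.ofReal_cpow hπb]
  rw [h2] at h
  exact_mod_cast h

lemma gauss_smul_eq {v p q : ℝ} (hv : 0 < v) (x : ℝ) :
    (gaussianPDFReal 0 v.toNNReal x).toNNReal • Real.exp (p * x ^ 2 + q * x)
      = (Real.sqrt (2 * π * v))⁻¹ * Real.exp ((p - 1/(2*v)) * x ^ 2 + q * x) := by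
  have hc : ((v.toNNReal : NNReal) : ℝ) = v := Real.coe_toNNReal v hv.le
  rw [NNReal.smul_def, smul_eq_mul, Real.coe_toNNReal _ (gaussianPDFReal_nonneg _ _ _)]
  simp only [gaussianPDFReal, hc, sub_zero]
  rw [mul_assoc, ← Real.exp_add]
  congr 2
  field_simp
  ring

lemma gauss_pdf_fun (v : ℝ) :
    gaussianPDF 0 v.toNNReal = fun x => ((gaussianPDFReal 0 v.toNNReal x).toNNReal : ENNReal) :=
  rfl

lemma gauss_integrable {v p q : ℝ} (hv : 0 < v) (hp : 2 * p * v < 1) :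
    Integrable (fun x => Real.exp (p * x ^ 2 + q * x)) (gaussianReal 0 v.toNNReal) := by
  have hvne : v.toNNReal ≠ 0 := by
    simp only [ne_eq, Real.toNNReal_eq_zero, not_le]; exact hv
  have hb : p - 1/(2*v) < 0 := by
    rw [sub_neg, lt_div_iff₀ (by linarith)]; linarith
  rw [gaussianReal_of_var_ne_zero 0 hvne, gauss_pdf_fun]
  rw [integrable_withDensity_iff_integrable_smul
    ((measurable_gaussianPDFReal 0 v.toNNReal).real_toNNReal)]
  have : (fun x => (gaussianPDFReal 0 v.toNNReal x).toNNReal • Real.exp (p * x ^ 2 + q * x))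
      = fun x => (Real.sqrt (2 * π * v))⁻¹ * Real.exp ((p - 1/(2*v)) * x ^ 2 + q * x) := by
    ext x; exact gauss_smul_eq hv x
  rw [this]
  exact (aux_int_rexp_quad hb q).const_mul _

lemma gauss_int {v p q : ℝ} (hv : 0 < v) (hp : 2 * p * v < 1) :
    ∫ x, Real.exp (p * x ^ 2 + q * x) ∂(gaussianReal 0 v.toNNReal)
      = Real.exp (q ^ 2 * v / (2 * (1 - 2 * p * v))) / Real.sqrt (1 - 2 * p * v) := by
  have hvne : v.toNNReal ≠ 0 := by
    simp only [ne_eq, Real.toNNReal_eq_zero, not_le]; exact hv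
  have hb : p - 1/(2*v) < 0 := by
    rw [sub_neg, lt_div_iff₀ (by linarith)]; linarith
  have hs : 0 < 1 - 2 * p * v := by linarith
  have h2πv : 0 < 2 * π * v := by positivity
  rw [gaussianReal_of_var_ne_zero 0 hvne, gauss_pdf_fun,
    integral_withDensity_eq_integral_smul
      ((measurable_gaussianPDFReal 0 v.toNNReal).real_toNNReal)]
  have h1 : (fun x => (gaussianPDFReal 0 v.toNNReal x).toNNReal • Real.exp (p * x ^ 2 + q * x))
      = fun x => (Real.sqrt (2 * π * v))⁻¹ * Real.exp ((p - 1/(2*v)) * x ^ 2 + q * x) := by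
    ext x; exact gauss_smul_eq hv x
  rw [h1, integral_const_mul, aux_rexp_quad hb q]
  have harg : π / -(p - 1/(2*v)) = (2 * π * v) / (1 - 2 * p * v) := by
    rw [div_eq_div_iff (by linarith : -(p - 1/(2*v)) ≠ 0) (ne_of_gt hs)]
    field_simp; ring
  have hsqrt : Real.sqrt (π / -(p - 1/(2*v))) = Real.sqrt (2 * π * v) / Real.sqrt (1 - 2 * p * v) := by
    rw [harg, Real.sqrt_div h2πv.le]
  have hexp : - q ^ 2 / (4 * (p - 1/(2*v))) = q ^ 2 * v / (2 * (1 - 2 * p * v)) := by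
    rw [div_eq_div_iff (by nlinarith : (4 * (p - 1/(2*v))) ≠ 0) (by positivity : 2 * (1 - 2*p*v) ≠ 0)]
    field_simp; ring
  rw [hsqrt, hexp, div_mul_eq_mul_div, ← mul_div_assoc, ← mul_assoc,
    inv_mul_cancel₀ (ne_of_gt (Real.sqrt_pos.mpr h2πv)), one_mul]

theorem stmt_11 {Ω : Type*} [MeasureSpace Ω] [IsProbabilityMeasure (ℙ : Measure Ω)]
    (T t α : ℝ) (h0 : 0 < t) (h1 : t < T) (hα : 0 < α) (hαt : α ^ 2 * t < T)
    (W Z : Ω → ℝ) (hWm : Measurable W) (hZm : Measurable Z)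
    (hW : Measure.map W ℙ = gaussianReal 0 t.toNNReal)
    (hZ : Measure.map Z ℙ = gaussianReal 0 (T - t).toNNReal)
    (hind : IndepFun W Z ℙ) :
    ∫ ω, Real.exp ((α / 2) * ((W ω + Z ω) ^ 2 / T + Real.log (T / (T - t))
        - (Z ω) ^ 2 / (T - t))) ∂ℙ =
      (T / (T + α * t)) ^ ((1 : ℝ) / 2) * (T / (T - t)) ^ (α / 2)
        * ((T + α * t) / (T - α ^ 2 * t)) ^ ((1 : ℝ) / 2) := by
  have hT : 0 < T := h0.trans h1
  have hTt : 0 < T - t := by linarith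
  have hS1pos : 0 < T - α ^ 2 * t := by linarith
  have hTαt : 0 < T + α * t := by positivity
  set μ1 := gaussianReal 0 t.toNNReal with hμ1
  set μ2 := gaussianReal 0 (T - t).toNNReal with hμ2
  have hmap : Measure.map (fun ω => (W ω, Z ω)) ℙ = μ1.prod μ2 := by
    have h := (indepFun_iff_map_prod_eq_prod_map_map hWm.aemeasurable hZm.aemeasurable).mp hind
    rw [h, hW, hZ]
  set f : ℝ × ℝ → ℝ := fun p =>
    Real.exp ((α / 2) * ((p.1 + p.2) ^ 2 / T + Real.log (T / (T - t)) - p.2 ^ 2 / (T - t)))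
    with hf
  have hfc : Continuous f := by fun_prop
  set A : ℝ := α / (2 * T) with hA
  set P2 : ℝ := α / (2 * T) - α / (2 * (T - t)) with hP2
  have hP2neg : P2 < 0 := by
    rw [hP2, sub_neg]
    apply div_lt_div_of_pos_left hα (by linarith) (by linarith)
  have hp2 : 2 * P2 * (T - t) < 1 := by nlinarith
  set S2 : ℝ := 1 - 2 * P2 * (T - t) with hS2
  have hS2pos : 0 < S2 := by linarith
  have hS2eq : S2 = (T + α * t) / T := by
    rw [hS2, hP2]; field_simp; ring
  set K : ℝ := Real.exp ((α / 2) * Real.log (T / (T - t))) with hK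
  set Pv : ℝ := A + 2 * A ^ 2 * (T - t) / S2 with hPv
  have hdecomp : ∀ w z : ℝ, (α / 2) * ((w + z) ^ 2 / T + Real.log (T / (T - t))
      - z ^ 2 / (T - t)) = (P2 * z ^ 2 + (2 * A * w) * z) + (A * w ^ 2
      + (α / 2) * Real.log (T / (T - t))) := by
    intro w z
    rw [hP2, hA]
    field_simp
    ring
  have hfsplit : ∀ w z : ℝ, f (w, z)
      = Real.exp (A * w ^ 2 + (α / 2) * Real.log (T / (T - t)))
        * Real.exp (P2 * z ^ 2 + (2 * A * w) * z) := by
    intro w z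
    rw [hf]
    simp only
    rw [hdecomp w z, Real.exp_add, mul_comm]
  have hexpo : ∀ w : ℝ, A * w ^ 2 + (α / 2) * Real.log (T / (T - t))
      + (2 * A * w) ^ 2 * (T - t) / (2 * S2)
      = (α / 2) * Real.log (T / (T - t)) + (Pv * w ^ 2 + 0 * w) := by
    intro w
    rw [hPv]
    field_simp [ne_of_gt hS2pos]
    ring
  have inner : ∀ w : ℝ, ∫ z, f (w, z) ∂μ2
      = (K / Real.sqrt S2) * Real.exp (Pv * w ^ 2 + 0 * w) := by
    intro w
    calc ∫ z, f (w, z) ∂μ2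
        = ∫ z, Real.exp (A * w ^ 2 + (α / 2) * Real.log (T / (T - t)))
            * Real.exp (P2 * z ^ 2 + (2 * A * w) * z) ∂μ2 := by
          exact integral_congr_ae (Filter.Eventually.of_forall fun z => hfsplit w z)
      _ = Real.exp (A * w ^ 2 + (α / 2) * Real.log (T / (T - t)))
            * (Real.exp ((2 * A * w) ^ 2 * (T - t) / (2 * S2)) / Real.sqrt S2) := by
          rw [integral_const_mul, gauss_int hTt hp2]
      _ = (K / Real.sqrt S2) * Real.exp (Pv * w ^ 2 + 0 * w) := by
          rw [hK]
          have e1 : Real.exp ((α/2) * Real.log (T/(T-t))) * Real.exp (Pv * w ^ 2 + 0 * w)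
              = Real.exp (A * w ^ 2 + (α / 2) * Real.log (T / (T - t)))
                * Real.exp ((2 * A * w) ^ 2 * (T - t) / (2 * S2)) := by
            rw [← Real.exp_add, ← Real.exp_add, hexpo w]
          rw [div_mul_eq_mul_div (Real.exp ((α/2) * Real.log (T/(T-t)))) (Real.sqrt S2)
              (Real.exp (Pv * w ^ 2 + 0 * w)), e1,
            mul_div_assoc (Real.exp (A * w ^ 2 + (α / 2) * Real.log (T / (T - t))))]
  have hinner_int : ∀ w : ℝ, Integrable (fun z => f (w, z)) μ2 := by
    intro w
    have : (fun z => f (w, z)) = fun z =>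
        Real.exp (A * w ^ 2 + (α / 2) * Real.log (T / (T - t)))
          * Real.exp (P2 * z ^ 2 + (2 * A * w) * z) := by
      ext z; exact hfsplit w z
    rw [this]
    exact (gauss_integrable hTt hp2).const_mul _
  have hp1 : 2 * Pv * t < 1 := by
    have h2Pv : 2 * Pv * t = α * (1 + α) * t / (T + α * t) := by
      rw [hPv, hA, hS2eq]
      field_simp
      ring
    rw [h2Pv, div_lt_one hTαt]
    nlinarith
  have hS1eq : 1 - 2 * Pv * t = (T - α ^ 2 * t) / (T + α * t) := by
    rw [hPv, hA, hS2eq]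
    field_simp
    ring
  have hint : Integrable f (μ1.prod μ2) := by
    rw [integrable_prod_iff hfc.aestronglyMeasurable]
    refine ⟨Filter.Eventually.of_forall hinner_int, ?_⟩
    have : (fun w => ∫ z, ‖f (w, z)‖ ∂μ2) = fun w =>
        (K / Real.sqrt S2) * Real.exp (Pv * w ^ 2 + 0 * w) := by
      ext w
      rw [← inner w]
      exact integral_congr_ae (Filter.Eventually.of_forall fun z =>
        norm_of_nonneg (Real.exp_nonneg _))
    rw [this]
    exact (gauss_integrable h0 hp1).const_mul _
  have step1 : ∫ ω, f (W ω, Z ω) ∂ℙ = ∫ p, f p ∂(μ1.prod μ2) := by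
    rw [← hmap, integral_map (hWm.prodMk hZm).aemeasurable hfc.aestronglyMeasurable]
  have step2 : ∫ p, f p ∂(μ1.prod μ2) = ∫ w, ∫ z, f (w, z) ∂μ2 ∂μ1 :=
    integral_prod f hint
  have step3 : ∫ w, ∫ z, f (w, z) ∂μ2 ∂μ1
      = (K / Real.sqrt S2) * (Real.exp (0 ^ 2 * t / (2 * (1 - 2 * Pv * t)))
          / Real.sqrt (1 - 2 * Pv * t)) := by
    rw [integral_congr_ae (Filter.Eventually.of_forall inner), integral_const_mul,
      gauss_int h0 hp1]
  have hKval : K = (T / (T - t)) ^ (α / 2) := by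
    rw [hK, Real.rpow_def_of_pos (div_pos hT hTt), mul_comm]
  have lhs_eq : (∫ ω, Real.exp ((α / 2) * ((W ω + Z ω) ^ 2 / T + Real.log (T / (T - t))
      - (Z ω) ^ 2 / (T - t))) ∂ℙ) = ∫ ω, f (W ω, Z ω) ∂ℙ := rfl
  rw [lhs_eq, step1, step2, step3, hS1eq, hKval, hS2eq]
  rw [← Real.sqrt_eq_rpow, ← Real.sqrt_eq_rpow]
  rw [Real.sqrt_div hTαt.le (T - α ^ 2 * t), Real.sqrt_div hTαt.le T, Real.sqrt_div hT.le, Real.sqrt_div hS1pos.le]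
  have e0 : (0:ℝ) ^ 2 * t / (2 * ((T - α ^ 2 * t) / (T + α * t))) = 0 := by
    simp
  rw [e0, Real.exp_zero]
  have s1 : (0:ℝ) < Real.sqrt T := Real.sqrt_pos.mpr hT
  have s2 : (0:ℝ) < Real.sqrt (T + α * t) := Real.sqrt_pos.mpr hTαt
  have s3 : (0:ℝ) < Real.sqrt (T - α ^ 2 * t) := Real.sqrt_pos.mpr hS1pos
  field_simp
end

section
/- Let W ~ N(0, t) and Z ~ N(0, T−t) be independent, 0 < t < T, and let α > 0. The expectation E[exp((α/2)·((W+Z)²/T − Z²/(T−t)))] is finite if and only if α² t < T. In particular, for the expectation to be finite for all t ∈ (0,T) it is necessary and sufficient that α ≤ 1. -/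
open MeasureTheory ProbabilityTheory Real
open scoped ENNReal

lemma lint1 (r : ℝ) : (∫⁻ x : ℝ, ENNReal.ofReal (Real.exp (r * x^2))) < ⊤ ↔ r < 0 := by
  constructor
  · contrapose!
    intro hr
    have h1 : ∀ x : ℝ, (1 : ℝ≥0∞) ≤ ENNReal.ofReal (Real.exp (r * x^2)) := by
      intro x
      rw [show (1:ℝ≥0∞) = ENNReal.ofReal 1 by simp]
      exact ENNReal.ofReal_le_ofReal (Real.one_le_exp (by positivity))
    calc (⊤ : ℝ≥0∞) = ∫⁻ _ : ℝ, 1 := by simp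
      _ ≤ _ := lintegral_mono h1
  · intro hr
    have hi : Integrable (fun x : ℝ => Real.exp (-(-r) * x^2)) := integrable_exp_neg_mul_sq (by linarith)
    simp only [neg_neg] at hi
    exact hi.lintegral_lt_top

lemma lint2 (a b c : ℝ) (hc : c < 0) :
    (∫⁻ w : ℝ, ∫⁻ z : ℝ, ENNReal.ofReal (Real.exp (a*w^2 + b*w*z + c*z^2))) < ⊤
      ↔ 0 < 4*a*c - b^2 := by
  have hc0 : c ≠ 0 := hc.ne
  set e := a - b^2/(4*c) with he
  have key : ∀ w z : ℝ, a*w^2 + b*w*z + c*z^2 = e*w^2 + c*(z + b*w/(2*c))^2 := by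
    intro w z; rw [he]; field_simp; ring
  set C := ∫⁻ z : ℝ, ENNReal.ofReal (Real.exp (c*z^2)) with hC
  have hCtop : C ≠ ⊤ := ((lint1 c).mpr hc).ne
  have hC0 : C ≠ 0 := by
    rw [hC, ← pos_iff_ne_zero, lintegral_pos_iff_support]
    · have : (Function.support fun z : ℝ => ENNReal.ofReal (Real.exp (c*z^2))) = Set.univ := by
        ext x; simp [Function.support, ENNReal.ofReal_pos, Real.exp_pos]
      rw [this]; simp
    · exact (measurable_const.mul (measurable_id.pow_const 2)).exp.ennreal_ofReal
  have inner : ∀ w : ℝ, (∫⁻ z : ℝ, ENNReal.ofReal (Real.exp (a*w^2 + b*w*z + c*z^2)))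
      = ENNReal.ofReal (Real.exp (e*w^2)) * C := by
    intro w
    have step1 : (∫⁻ z : ℝ, ENNReal.ofReal (Real.exp (a*w^2 + b*w*z + c*z^2)))
        = ∫⁻ z : ℝ, ENNReal.ofReal (Real.exp (e*w^2)) * ENNReal.ofReal (Real.exp (c*(z + b*w/(2*c))^2)) := by
      refine lintegral_congr fun z => ?_
      rw [key w z, Real.exp_add, ENNReal.ofReal_mul (Real.exp_nonneg _)]
    rw [step1, lintegral_const_mul _ ?_]
    · congr 1
      exact lintegral_add_right_eq_self (fun z => ENNReal.ofReal (Real.exp (c*z^2))) (b*w/(2*c))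
    · exact ((measurable_const.mul ((measurable_id.add_const _).pow_const 2)).exp).ennreal_ofReal
  rw [lintegral_congr inner, lintegral_mul_const' C _ hCtop]
  have h1 : (∫⁻ w : ℝ, ENNReal.ofReal (Real.exp (e*w^2))) * C < ⊤
      ↔ (∫⁻ w : ℝ, ENNReal.ofReal (Real.exp (e*w^2))) < ⊤ := by
    rw [ENNReal.mul_lt_top_iff]
    constructor
    · rintro (⟨h, _⟩ | h | h)
      · exact h
      · simp [h]
      · exact absurd h hC0
    · exact fun h => Or.inl ⟨h, hCtop.lt_top⟩
  rw [h1, lint1]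
  have hid : e * (4*c) = 4*a*c - b^2 := by
    rw [he, sub_mul, div_mul_cancel₀ _ (mul_ne_zero four_ne_zero hc0)]; ring
  constructor
  · intro h; nlinarith
  · intro h; nlinarith

set_option maxHeartbeats 1600000 in
private lemma lint3 (T t α : ℝ) (hT : 0 < T) (h0 : 0 < t) (h1 : t < T) (hα : 0 < α)
    (A B Cc K : ℝ) (hKnn : 0 ≤ K)
    (hpt : ∀ w z : ℝ, gaussianPDFReal 0 t.toNNReal w
        * (gaussianPDFReal 0 (T-t).toNNReal z
          * Real.exp ((α/2) * ((w + z)^2 / T - z^2 / (T - t))))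
        = K * Real.exp (A*w^2 + B*w*z + Cc*z^2)) :
    (∫⁻ p : ℝ × ℝ, ENNReal.ofReal (Real.exp ((α/2) * ((p.1 + p.2)^2 / T - p.2^2 / (T - t))))
        ∂((gaussianReal 0 t.toNNReal).prod (gaussianReal 0 (T-t).toNNReal)))
      = ENNReal.ofReal K
        * ∫⁻ w : ℝ, ∫⁻ z : ℝ, ENNReal.ofReal (Real.exp (A*w^2 + B*w*z + Cc*z^2)) := by
  have hv2 : 0 < T - t := by linarith
  have ht0 : t.toNNReal ≠ 0 := by
    simp only [ne_eq, Real.toNNReal_eq_zero, not_le]; exact h0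
  have hv0 : (T - t).toNNReal ≠ 0 := by
    simp only [ne_eq, Real.toNNReal_eq_zero, not_le]; exact hv2
  have hFm : Measurable (fun p : ℝ × ℝ =>
      ENNReal.ofReal (Real.exp ((α/2) * ((p.1 + p.2)^2 / T - p.2^2 / (T - t))))) := by
    apply Measurable.ennreal_ofReal
    apply Measurable.exp
    apply Measurable.const_mul
    exact (((measurable_fst.add measurable_snd).pow_const 2).div_const T).sub
      ((measurable_snd.pow_const 2).div_const (T - t))
  have hQm : Measurable (fun p : ℝ × ℝ =>
      ENNReal.ofReal (Real.exp (A*p.1^2 + B*p.1*p.2 + Cc*p.2^2))) := by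
    apply Measurable.ennreal_ofReal
    apply Measurable.exp
    exact (((measurable_fst.pow_const 2).const_mul A).add
      (((measurable_fst.const_mul B).mul measurable_snd))).add
      ((measurable_snd.pow_const 2).const_mul Cc)
  have hFw : ∀ w : ℝ, Measurable fun z : ℝ =>
      ENNReal.ofReal (Real.exp ((α/2) * ((w + z)^2 / T - z^2 / (T - t)))) := by
    intro w
    apply Measurable.ennreal_ofReal
    apply Measurable.exp
    apply Measurable.const_mul
    exact (((measurable_const.add measurable_id).pow_const 2).div_const T).sub
      ((measurable_id.pow_const 2).div_const (T - t))
  have hQw : ∀ w : ℝ, Measurable fun z : ℝ =>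
      ENNReal.ofReal (Real.exp (A*w^2 + B*w*z + Cc*z^2)) := by
    intro w
    apply Measurable.ennreal_ofReal
    apply Measurable.exp
    exact (measurable_const.add ((measurable_id.const_mul (B*w)))).add
      ((measurable_id.pow_const 2).const_mul Cc) |>.comp measurable_id |>.mono le_rfl le_rfl
  calc (∫⁻ p : ℝ × ℝ, ENNReal.ofReal (Real.exp ((α/2) * ((p.1 + p.2)^2 / T - p.2^2 / (T - t))))
        ∂((gaussianReal 0 t.toNNReal).prod (gaussianReal 0 (T-t).toNNReal)))
      = ∫⁻ w, (∫⁻ z, ENNReal.ofReal (Real.exp ((α/2) * ((w + z)^2 / T - z^2 / (T - t))))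
          ∂(gaussianReal 0 (T-t).toNNReal)) ∂(gaussianReal 0 t.toNNReal) := by
        exact lintegral_prod _ hFm.aemeasurable
    _ = ∫⁻ w, (∫⁻ z : ℝ, gaussianPDF 0 (T-t).toNNReal z
          * ENNReal.ofReal (Real.exp ((α/2) * ((w + z)^2 / T - z^2 / (T - t)))))
          ∂(gaussianReal 0 t.toNNReal) := by
        refine lintegral_congr fun w => ?_
        rw [gaussianReal_of_var_ne_zero _ hv0,
          lintegral_withDensity_eq_lintegral_mul _ (measurable_gaussianPDF _ _)
            (hFw w)]
        rfl
    _ = ∫⁻ w : ℝ, gaussianPDF 0 t.toNNReal w * ∫⁻ z : ℝ, gaussianPDF 0 (T-t).toNNReal z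
          * ENNReal.ofReal (Real.exp ((α/2) * ((w + z)^2 / T - z^2 / (T - t)))) := by
        rw [gaussianReal_of_var_ne_zero _ ht0,
          lintegral_withDensity_eq_lintegral_mul _ (measurable_gaussianPDF _ _)
            (Measurable.lintegral_prod_right'
              (f := fun p : ℝ × ℝ => gaussianPDF 0 (T-t).toNNReal p.2
                * ENNReal.ofReal (Real.exp ((α/2) * ((p.1 + p.2)^2 / T - p.2^2 / (T - t)))))
              (((measurable_gaussianPDF _ _).comp measurable_snd).mul hFm))]
        rfl
    _ = ∫⁻ w : ℝ, ∫⁻ z : ℝ, ENNReal.ofReal K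
          * ENNReal.ofReal (Real.exp (A*w^2 + B*w*z + Cc*z^2)) := by
        refine lintegral_congr fun w => ?_
        rw [← lintegral_const_mul _ (f := fun z => gaussianPDF 0 (T-t).toNNReal z
            * ENNReal.ofReal (Real.exp ((α/2) * ((w + z)^2 / T - z^2 / (T - t)))))
          ((measurable_gaussianPDF _ _).mul (hFw w))]
        refine lintegral_congr fun z => ?_
        rw [gaussianPDF, gaussianPDF,
          ← ENNReal.ofReal_mul (gaussianPDFReal_nonneg _ _ _),
          ← ENNReal.ofReal_mul (gaussianPDFReal_nonneg _ _ _),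
          ← ENNReal.ofReal_mul hKnn, ← mul_assoc]
        exact congrArg ENNReal.ofReal (by rw [← hpt w z]; ring)
    _ = ENNReal.ofReal K
        * ∫⁻ w : ℝ, ∫⁻ z : ℝ, ENNReal.ofReal (Real.exp (A*w^2 + B*w*z + Cc*z^2)) := by
        rw [← lintegral_const_mul _ (Measurable.lintegral_prod_right'
          (f := fun p : ℝ × ℝ => ENNReal.ofReal (Real.exp (A*p.1^2 + B*p.1*p.2 + Cc*p.2^2))) hQm)]
        exact lintegral_congr fun w =>
          lintegral_const_mul _ (hQw w)


set_option maxHeartbeats 1600000 in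
theorem stmt_12 {Ω : Type*} [MeasureSpace Ω] [IsProbabilityMeasure (ℙ : Measure Ω)]
    (T t α : ℝ) (hT : 0 < T) (h0 : 0 < t) (h1 : t < T) (hα : 0 < α)
    (W Z : Ω → ℝ) (hWm : Measurable W) (hZm : Measurable Z)
    (hW : Measure.map W ℙ = gaussianReal 0 t.toNNReal)
    (hZ : Measure.map Z ℙ = gaussianReal 0 (T - t).toNNReal)
    (hind : IndepFun W Z ℙ) :
    (Integrable (fun ω => Real.exp ((α / 2) * ((W ω + Z ω) ^ 2 / T
        - (Z ω) ^ 2 / (T - t)))) ℙ ↔ α ^ 2 * t < T) ∧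
      ((∀ s ∈ Set.Ioo (0 : ℝ) T, α ^ 2 * s < T) ↔ α ≤ 1) := by
  have hv2 : 0 < T - t := by linarith
  constructor
  · -- main equivalence
    set A : ℝ := α/(2*T) - 1/(2*t) with hA
    set B : ℝ := α/T with hB
    set Cc : ℝ := α/(2*T) - (α+1)/(2*(T-t)) with hCc
    have hCcneg : Cc < 0 := by
      rw [hCc, sub_neg, div_lt_div_iff₀ (by linarith) (by linarith)]
      nlinarith
    have ht' : (t.toNNReal : ℝ) = t := Real.coe_toNNReal t h0.le
    have hv2' : ((T - t).toNNReal : ℝ) = T - t := Real.coe_toNNReal _ hv2.le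
    set K : ℝ := (Real.sqrt (2 * Real.pi * t))⁻¹ * (Real.sqrt (2 * Real.pi * (T - t)))⁻¹ with hK
    have hKpos : 0 < K := by rw [hK]; positivity
    have hpt : ∀ w z : ℝ, gaussianPDFReal 0 t.toNNReal w
        * (gaussianPDFReal 0 (T-t).toNNReal z
          * Real.exp ((α/2) * ((w + z)^2 / T - z^2 / (T - t))))
        = K * Real.exp (A*w^2 + B*w*z + Cc*z^2) := by
      intro w z
      rw [gaussianPDFReal, gaussianPDFReal, ht', hv2', hK]
      rw [show ∀ x1 e1 x2 e2 e3 : ℝ, x1 * e1 * (x2 * e2 * e3) = x1 * x2 * (e1 * (e2 * e3))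
        from fun _ _ _ _ _ => by ring]
      congr 1
      rw [← Real.exp_add, ← Real.exp_add]
      congr 1
      rw [hA, hB, hCc]
      field_simp
      ring
    have hFm : Measurable (fun p : ℝ × ℝ =>
        ENNReal.ofReal (Real.exp ((α/2) * ((p.1 + p.2)^2 / T - p.2^2 / (T - t))))) := by
      apply Measurable.ennreal_ofReal
      apply Measurable.exp
      apply Measurable.const_mul
      exact (((measurable_fst.add measurable_snd).pow_const 2).div_const T).sub
        ((measurable_snd.pow_const 2).div_const (T - t))
    have hmap : Measure.map (fun ω => (W ω, Z ω)) ℙ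
        = (gaussianReal 0 t.toNNReal).prod (gaussianReal 0 (T-t).toNNReal) := by
      rw [← hW, ← hZ]
      exact (indepFun_iff_map_prod_eq_prod_map_map hWm.aemeasurable hZm.aemeasurable).mp hind
    have hlike : (∫⁻ ω, ENNReal.ofReal (Real.exp ((α / 2) * ((W ω + Z ω) ^ 2 / T
          - (Z ω) ^ 2 / (T - t)))) ∂ℙ)
        = ∫⁻ p : ℝ × ℝ, ENNReal.ofReal (Real.exp ((α/2) * ((p.1 + p.2)^2 / T - p.2^2 / (T - t))))
          ∂((gaussianReal 0 t.toNNReal).prod (gaussianReal 0 (T-t).toNNReal)) := by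
      rw [← hmap, lintegral_map hFm (hWm.prodMk hZm)]
    have hm : Measurable (fun ω => Real.exp ((α/2) * ((W ω + Z ω)^2 / T - (Z ω)^2 / (T - t)))) := by
      apply Measurable.exp
      apply Measurable.const_mul
      exact (((hWm.add hZm).pow_const 2).div_const T).sub ((hZm.pow_const 2).div_const (T-t))
    have hiff : Integrable (fun ω => Real.exp ((α / 2) * ((W ω + Z ω) ^ 2 / T
        - (Z ω) ^ 2 / (T - t)))) ℙ ↔ (∫⁻ ω, ENNReal.ofReal (Real.exp ((α / 2) *
          ((W ω + Z ω) ^ 2 / T - (Z ω) ^ 2 / (T - t)))) ∂ℙ) < ⊤ := by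
      constructor
      · intro hI
        exact hI.lintegral_lt_top
      · intro h
        refine ⟨hm.aestronglyMeasurable, ?_⟩
        rw [hasFiniteIntegral_iff_ofReal (ae_of_all _ fun ω => Real.exp_nonneg _)]
        exact h
    rw [hiff, hlike, lint3 T t α hT h0 h1 hα A B Cc K hKpos.le hpt]
    have hfin : ENNReal.ofReal K * (∫⁻ w : ℝ, ∫⁻ z : ℝ,
        ENNReal.ofReal (Real.exp (A*w^2 + B*w*z + Cc*z^2))) < ⊤
        ↔ (∫⁻ w : ℝ, ∫⁻ z : ℝ, ENNReal.ofReal (Real.exp (A*w^2 + B*w*z + Cc*z^2))) < ⊤ := by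
      rw [ENNReal.mul_lt_top_iff]
      constructor
      · rintro (⟨_, h⟩ | h | h)
        · exact h
        · exact absurd h (by simp [ENNReal.ofReal_eq_zero, not_le, hKpos])
        · simp [h]
      · exact fun h => Or.inl ⟨ENNReal.ofReal_lt_top, h⟩
    rw [hfin, lint2 A B Cc hCcneg]
    have hid : 4*A*Cc - B^2 = (T - α^2*t)/(T*t*(T-t)) := by
      rw [hA, hB, hCc]
      field_simp
      ring
    rw [hid]
    have hden : 0 < T*t*(T-t) := by positivity
    constructor
    · intro hpos
      rcases div_pos_iff.mp hpos with ⟨h, _⟩ | ⟨_, hneg⟩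
      · linarith
      · linarith
    · intro hlt
      exact div_pos (by linarith) hden
  · constructor
    · intro h
      by_contra hle
      push_neg at hle
      have hs : T/α^2 ∈ Set.Ioo (0:ℝ) T := by
        constructor
        · positivity
        · rw [div_lt_iff₀ (by positivity)]
          nlinarith [mul_pos hT (show (0:ℝ) < α^2 - 1 by nlinarith)]
      have h2 := h _ hs
      have h3 : α^2 * (T/α^2) = T := by field_simp
      linarith [h2, h3.ge, h3.le]
    · intro hα1 s hs
      obtain ⟨hs0, hsT⟩ := hs
      nlinarith [mul_le_mul_of_nonneg_right (show α^2 ≤ 1 by nlinarith) hs0.le]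
end
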